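/- For t ∈ (0,1], let Ricc_{μ_t} = diag(−(t²+1)/(2t)·I₄, (t²+1)/(2t)·I₂) on ℝ⁶ = ℝ⁴ ⊕ ℝ². Then Ricc_{μ_t} = cI + D with c = −3(t²+1)/(2t) and D = ((t²+1)/t)·diag(1,1,1,1,2,2), and D is a derivation of the bracket μ_t of Example (μ_t(e₁,e₂)=√t e₅, μ_t(e₁,e₄)=(1/√t)e₆, μ_t(e₂,e₃)=−(1/√t)e₆, μ_t(e₃,e₄)=−√t e₅). -/
import Mathlib


open Real

/-- The bracket `μ_t` on `ℝ⁶`: `μ_t(e₁,e₂) = √t e₅`, `μ_t(e₁,e₄) = (1/√t) e₆`,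
`μ_t(e₂,e₃) = −(1/√t) e₆`, `μ_t(e₃,e₄) = −√t e₅`. -/
noncomputable def muT (t : ℝ) (X Y : Fin 6 → ℝ) : Fin 6 → ℝ :=
  ![0, 0, 0, 0,
    Real.sqrt t * (X 0 * Y 1 - X 1 * Y 0) - Real.sqrt t * (X 2 * Y 3 - X 3 * Y 2),
    (1 / Real.sqrt t) * (X 0 * Y 3 - X 3 * Y 0)
      - (1 / Real.sqrt t) * (X 1 * Y 2 - X 2 * Y 1)]

/-- The operator `Ricc_{μ_t} = diag(−(t²+1)/(2t)·I₄, (t²+1)/(2t)·I₂)`. -/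
noncomputable def riccOp (t : ℝ) (X : Fin 6 → ℝ) : Fin 6 → ℝ := fun i =>
  (![-(t ^ 2 + 1) / (2 * t), -(t ^ 2 + 1) / (2 * t), -(t ^ 2 + 1) / (2 * t),
     -(t ^ 2 + 1) / (2 * t), (t ^ 2 + 1) / (2 * t), (t ^ 2 + 1) / (2 * t)] i)
    * X i

/-- The operator `D = ((t²+1)/t) · diag(1,1,1,1,2,2)`. -/
noncomputable def Dop (t : ℝ) (X : Fin 6 → ℝ) : Fin 6 → ℝ := fun i =>
  ((t ^ 2 + 1) / t) * (![1, 1, 1, 1, 2, 2] i) * X i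

lemma vec6_five {α : Type*} (a b c d e f : α) :
    (![a, b, c, d, e, f] : Fin 6 → α) 5 = f := rfl

/-- `Ricc_{μ_t} = cI + D` with `c = −3(t²+1)/(2t)` and
`D = ((t²+1)/t)·diag(1,1,1,1,2,2)`, and `D` is a derivation of `μ_t`. -/
theorem stmt10 (t : ℝ) (ht : t ∈ Set.Ioc (0 : ℝ) 1) :
    (∀ X : Fin 6 → ℝ, riccOp t X = (-3 * (t ^ 2 + 1) / (2 * t)) • X + Dop t X) ∧
    (∀ X Y : Fin 6 → ℝ,
      Dop t (muT t X Y) = muT t (Dop t X) Y + muT t X (Dop t Y)) := by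
  have ht0 : t ≠ 0 := ne_of_gt ht.1
  constructor
  · intro X
    funext i
    fin_cases i <;>
      simp [riccOp, Dop, Matrix.cons_val_zero, Matrix.cons_val_one, Matrix.cons_val_succ, vec6_five] <;> ring
  · intro X Y
    funext i
    fin_cases i <;>
      simp [Dop, muT, Matrix.cons_val_zero, Matrix.cons_val_one, Matrix.cons_val_succ, vec6_five] <;> ring
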